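/- Let $\alpha \in (0,1)$ and let $f : (0,\infty) \to \mathbb{R}$ be smooth with compact support in $(0,\infty)$. Define $\Psi_2(R) = -\frac{1}{\alpha^2} \int_R^\infty \frac{1}{\rho^{4/\alpha + 1}} \int_0^\rho \frac{f(s)}{s^{1 - 4/\alpha}}\, ds\, d\rho$. Then $\Psi_2$ satisfies the ODE $\alpha^2 R^2 \Psi_2''(R) + (4\alpha + \alpha^2) R \Psi_2'(R) = f(R)$ for all $R > 0$, and moreover $\Psi_2(R) = -\frac{1}{4\alpha}\int_R^\infty \frac{f(s)}{s}\,ds - \frac{1}{4\alpha}\frac{1}{R^{4/\alpha}}\int_0^R \frac{f(s)}{s^{1-4/\alpha}}\,ds$. -/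

import Mathlib

open MeasureTheory Set Filter intervalIntegral

namespace Stmt11

lemma cont_mul_aux {f w : ℝ → ℝ} {a b : ℝ} (hf : Continuous f) (ha : 0 < a)
    (h0 : ∀ s, s ∉ Set.Icc a b → f s = 0) (hw : ContinuousOn w (Set.Ioi 0)) :
    Continuous fun x => f x * w x := by
  rw [continuous_iff_continuousAt]
  intro x
  rcases lt_or_ge x a with hx | hx
  · have hev : (fun x => f x * w x) =ᶠ[nhds x] fun _ => (0:ℝ) := by
      filter_upwards [Iio_mem_nhds hx] with y hy
      rw [h0 y (fun hc => absurd hc.1 (not_le.2 hy)), zero_mul]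
    exact ContinuousAt.congr continuousAt_const hev.symm
  · have hx0 : (0:ℝ) < x := ha.trans_le hx
    exact hf.continuousAt.mul (hw.continuousAt (Ioi_mem_nhds hx0))

noncomputable def Psi (α : ℝ) (f : ℝ → ℝ) : ℝ → ℝ := fun R =>
  -(1 / α ^ 2) * ∫ ρ in Set.Ioi R,
    (1 / ρ ^ ((4:ℝ) / α + 1)) * ∫ s in Set.Ioc (0:ℝ) ρ, f s / s ^ ((1:ℝ) - 4 / α)

lemma main (α : ℝ) (hα0 : 0 < α) (f : ℝ → ℝ) (hf : Continuous f)
    (a b : ℝ) (ha : 0 < a) (h0 : ∀ s, s ∉ Set.Icc a b → f s = 0) (R : ℝ) (hR : 0 < R) :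
    (α ^ 2 * R ^ 2 * deriv (deriv (Psi α f)) R
        + (4 * α + α ^ 2) * R * deriv (Psi α f) R = f R) ∧
      Psi α f R = -(1 / (4 * α)) * (∫ s in Set.Ioi R, f s / s)
              - (1 / (4 * α)) * (1 / R ^ ((4:ℝ) / α))
                * ∫ s in Set.Ioc (0:ℝ) R, f s / s ^ ((1:ℝ) - 4 / α) := by
  have hα : α ≠ 0 := hα0.ne'
  set p : ℝ := 4 / α with hpdef
  have hp : 0 < p := by positivity
  set h : ℝ → ℝ := fun s => f s / s ^ ((1:ℝ) - 4 / α) with hhdef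
  -- continuity of h
  have hh : Continuous h := by
    have := cont_mul_aux (w := fun x => (x ^ ((1:ℝ) - 4/α))⁻¹) hf ha h0
      (fun x hx => ((Real.continuousAt_rpow_const x _ (Or.inl (ne_of_gt hx))).inv₀
        (Real.rpow_pos_of_pos hx _).ne').continuousWithinAt)
    simpa only [hhdef, div_eq_mul_inv] using this
  have hhsupp : HasCompactSupport h :=
    HasCompactSupport.intro (isCompact_Icc (a:=a) (b:=b)) (fun x hx => by
      simp only [hhdef, h0 x hx, zero_div])
  have hhint : Integrable h := hh.integrable_of_hasCompactSupport hhsupp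
  set G : ℝ → ℝ := fun ρ => ∫ s in (0:ℝ)..ρ, h s with hGdef
  have hG : ∀ x : ℝ, HasDerivAt G (h x) x := fun x =>
    integral_hasDerivAt_right (hh.intervalIntegrable _ _)
      (hh.stronglyMeasurableAtFilter _ _) hh.continuousAt
  have hGcont : Continuous G := Differentiable.continuous (fun x => (hG x).differentiableAt)
  have hGb : ∀ x, b ≤ x → G x = G b := by
    intro x hbx
    have h1 : G x = G b + ∫ s in b..x, h s := by
      show (∫ s in (0:ℝ)..x, h s) = (∫ s in (0:ℝ)..b, h s) + ∫ s in b..x, h s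
      rw [intervalIntegral.integral_add_adjacent_intervals
        (hh.intervalIntegrable 0 b) (hh.intervalIntegrable b x)]
    have h2 : ∫ s in b..x, h s = 0 := by
      rw [intervalIntegral.integral_of_le hbx]
      apply MeasureTheory.setIntegral_eq_zero_of_forall_eq_zero
      intro s hs
      simp only [hhdef, h0 s (fun hc => absurd hc.2 (not_le.2 hs.1)), zero_div]
    rw [h1, h2, add_zero]
  set M : ℝ := ∫ s, ‖h s‖ with hMdef
  have hGM : ∀ ρ : ℝ, 0 ≤ ρ → ‖G ρ‖ ≤ M := by
    intro ρ hρ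
    rw [hGdef]
    simp only
    rw [intervalIntegral.integral_of_le hρ]
    calc ‖∫ s in Set.Ioc 0 ρ, h s‖ ≤ ∫ s in Set.Ioc 0 ρ, ‖h s‖ :=
          norm_integral_le_integral_norm h
      _ ≤ M := setIntegral_le_integral hhint.norm
          (Filter.Eventually.of_forall fun x => norm_nonneg _)
  set e : ℝ := -(p + 1) with hedef
  have he : e < -1 := by simp only [hedef]; linarith
  set K : ℝ → ℝ := fun x => x ^ e * G x with hKdef
  have hKcont' : ∀ {x : ℝ}, 0 < x → ContinuousAt K x := fun {x} hx =>
    (Real.continuousAt_rpow_const x e (Or.inl hx.ne')).mul hGcont.continuousAt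
  have hKint : ∀ {c : ℝ}, 0 < c → IntegrableOn K (Set.Ioi c) := by
    intro c hc
    apply Integrable.mono' ((integrableOn_Ioi_rpow_of_lt he hc).const_mul M)
    · exact ContinuousOn.aestronglyMeasurable
        (fun x hx => ((hKcont' (hc.trans hx)).continuousWithinAt)) measurableSet_Ioi
    · filter_upwards [ae_restrict_mem measurableSet_Ioi] with x hx
      have hx0 : (0:ℝ) < x := hc.trans hx
      have := Real.rpow_pos_of_pos hx0 e
      calc ‖K x‖ = x ^ e * ‖G x‖ := by
            rw [hKdef]; simp only [norm_mul, Real.norm_eq_abs, abs_of_pos this]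
        _ ≤ x ^ e * M := by
            exact mul_le_mul_of_nonneg_left (hGM x hx0.le) this.le
        _ = M * x ^ e := mul_comm _ _
  set F : ℝ → ℝ := fun R => ∫ x in Set.Ioi R, K x with hFdef
  have hFsplit : ∀ x c : ℝ, 0 < x → 0 < c → F x = F c - ∫ t in c..x, K t := by
    intro x c hx hc
    rcases le_total x c with hxc | hcx
    · have hsplit : F x = (∫ t in Set.Ioc x c, K t) + F c := by
        rw [hFdef]
        simp only
        rw [← Set.Ioc_union_Ioi_eq_Ioi hxc,
          MeasureTheory.setIntegral_union (Set.Ioc_disjoint_Ioi le_rfl)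
            measurableSet_Ioi ((hKint hx).mono_set Set.Ioc_subset_Ioi_self) (hKint hc)]
      rw [hsplit, intervalIntegral.integral_symm,
        intervalIntegral.integral_of_le hxc]
      ring
    · have hsplit : F c = (∫ t in Set.Ioc c x, K t) + F x := by
        rw [hFdef]
        simp only
        rw [← Set.Ioc_union_Ioi_eq_Ioi hcx,
          MeasureTheory.setIntegral_union (Set.Ioc_disjoint_Ioi le_rfl)
            measurableSet_Ioi ((hKint hc).mono_set Set.Ioc_subset_Ioi_self) (hKint hx)]
      rw [intervalIntegral.integral_of_le hcx]
      linarith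
  have hF' : ∀ x : ℝ, 0 < x → HasDerivAt F (-K x) x := by
    intro x hx
    have hmain : HasDerivAt (fun y => F x - ∫ t in x..y, K t) (-K x) x := by
      have := (integral_hasDerivAt_right (f := K) (a := x) (b := x)
        (by simp [intervalIntegrable_iff_integrableOn_Ioc_of_le])
        (ContinuousAt.stronglyMeasurableAtFilter isOpen_Ioi
          (fun y hy => hKcont' hy) x hx)
        (hKcont' hx)).const_sub (F x)
      exact this
    apply hmain.congr_of_eventuallyEq
    filter_upwards [(isOpen_Ioi).mem_nhds hx] with y hy
    exact hFsplit y x hy hx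
  -- the statement function agrees with -(1/α²) F on Ioi 0
  have hΨeq : ∀ x : ℝ, 0 < x → Psi α f x = -(1 / α ^ 2) * F x := by
    intro x hx
    unfold Psi
    congr 1
    apply MeasureTheory.setIntegral_congr_fun measurableSet_Ioi
    intro ρ hρ
    have hρ0 : (0:ℝ) < ρ := hx.trans hρ
    have h1 : ∫ s in Set.Ioc (0:ℝ) ρ, f s / s ^ ((1:ℝ) - 4 / α) = G ρ := by
      rw [hGdef]
      exact (intervalIntegral.integral_of_le hρ0.le).symm
    have h2 : 1 / ρ ^ ((4:ℝ) / α + 1) = ρ ^ e := by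
      rw [hedef, Real.rpow_neg hρ0.le, one_div, hpdef]
    show 1 / ρ ^ ((4:ℝ) / α + 1)
        * (∫ s in Set.Ioc (0:ℝ) ρ, f s / s ^ ((1:ℝ) - 4 / α)) = K ρ
    rw [h1, h2]
  have hΨev : ∀ x : ℝ, 0 < x →
      Psi α f =ᶠ[nhds x] fun y => -(1 / α ^ 2) * F y := by
    intro x hx
    filter_upwards [(isOpen_Ioi).mem_nhds hx] with y hy
    exact hΨeq y hy
  have hΨ' : ∀ x : ℝ, 0 < x → HasDerivAt (Psi α f) (1 / α ^ 2 * K x) x := by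
    intro x hx
    have h1 : HasDerivAt (fun y => -(1 / α ^ 2) * F y) (1 / α ^ 2 * K x) x := by
      have := (hF' x hx).const_mul (-(1 / α ^ 2))
      refine this.congr_deriv ?_
      ring
    exact h1.congr_of_eventuallyEq (hΨev x hx)
  have hdΨ : ∀ x : ℝ, 0 < x → deriv (Psi α f) x = 1 / α ^ 2 * K x :=
    fun x hx => (hΨ' x hx).deriv
  have hK' : ∀ x : ℝ, 0 < x →
      HasDerivAt K (e * x ^ (e - 1) * G x + x ^ e * h x) x := by
    intro x hx
    exact (Real.hasDerivAt_rpow_const (Or.inl hx.ne')).mul (hG x)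
  have hdd : deriv (deriv (Psi α f)) R
      = 1 / α ^ 2 * (e * R ^ (e - 1) * G R + R ^ e * h R) := by
    have hev : deriv (Psi α f) =ᶠ[nhds R] fun x => 1 / α ^ 2 * K x := by
      filter_upwards [(isOpen_Ioi).mem_nhds hR] with y hy
      exact hdΨ y hy
    rw [hev.deriv_eq]
    exact (HasDerivAt.const_mul (1 / α ^ 2) (hK' R hR)).deriv
  have hRne : ∀ q : ℝ, (R:ℝ) ^ q ≠ 0 := fun q => (Real.rpow_pos_of_pos hR q).ne'
  have hrw2 : (R:ℝ) ^ (2:ℕ) = R ^ ((2:ℝ)) := by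
    rw [← Real.rpow_natCast R 2]; norm_num
  have hmul : ∀ u v : ℝ, R ^ u * R ^ v = R ^ (u + v) :=
    fun u v => (Real.rpow_add hR u v).symm
  constructor
  · -- the ODE
    rw [hdd, hdΨ R hR]
    have hKR : K R = R ^ e * G R := rfl
    have hhR : h R = f R / R ^ ((1:ℝ) - 4 / α) := rfl
    rw [hKR, hhR]
    have e1 : R ^ ((2:ℝ)) * R ^ (e - 1) = R ^ (e + 1) := by
      rw [hmul]; ring_nf
    have e2 : R ^ ((2:ℝ)) * R ^ e = R ^ ((1:ℝ) - 4 / α) := by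
      rw [hmul]; congr 1; rw [hedef, hpdef]; ring
    have e3 : R * R ^ e = R ^ (e + 1) := by
      nth_rewrite 1 [← Real.rpow_one R]; rw [hmul]; ring_nf
    have e4 : R ^ ((1:ℝ) - 4 / α) * (f R / R ^ ((1:ℝ) - 4 / α)) = f R :=
      mul_div_cancel₀ _ (hRne _)
    have key : α ^ 2 * R ^ (2:ℕ) * (1 / α ^ 2 * (e * R ^ (e - 1) * G R + R ^ e * (f R / R ^ ((1:ℝ) - 4 / α))))
        + (4 * α + α ^ 2) * R * (1 / α ^ 2 * (R ^ e * G R)) = f R := by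
      rw [hrw2]
      have expand : α ^ 2 * R ^ ((2:ℝ)) * (1 / α ^ 2 * (e * R ^ (e - 1) * G R + R ^ e * (f R / R ^ ((1:ℝ) - 4 / α))))
          + (4 * α + α ^ 2) * R * (1 / α ^ 2 * (R ^ e * G R))
          = e * (R ^ ((2:ℝ)) * R ^ (e - 1)) * G R
            + (R ^ ((2:ℝ)) * R ^ e) * (f R / R ^ ((1:ℝ) - 4 / α))
            + ((4 * α + α ^ 2) / α ^ 2) * (R * R ^ e) * G R := by
        field_simp
      rw [expand, e1, e2, e3, e4]
      have : (4 * α + α ^ 2) / α ^ 2 = p + 1 := by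
        rw [hpdef]; field_simp
      rw [this, hedef]
      ring
    exact key
  · -- the integration-by-parts identity
    set q : ℝ → ℝ := fun x => f x / x with hqdef
    have hq : Continuous q := by
      have := cont_mul_aux (w := fun x : ℝ => x⁻¹) hf ha h0
        (fun x hx => (continuousAt_inv₀ (ne_of_gt hx)).continuousWithinAt)
      simpa only [hqdef, div_eq_mul_inv] using this
    have hqsupp : HasCompactSupport q :=
      HasCompactSupport.intro (isCompact_Icc (a := a) (b := b))
        (fun x hx => by simp only [hqdef, h0 x hx, zero_div])
    have hqint : Integrable q := hq.integrable_of_hasCompactSupport hqsupp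
    set u : ℝ → ℝ := fun x => -(α / 4) * (x ^ (-p) * G x) with hudef
    have hu' : ∀ x : ℝ, 0 < x → HasDerivAt u (K x - α / 4 * q x) x := by
      intro x hx
      have h1 : HasDerivAt (fun y : ℝ => y ^ (-p) * G y)
          (-p * x ^ (-p - 1) * G x + x ^ (-p) * h x) x :=
        (Real.hasDerivAt_rpow_const (Or.inl hx.ne')).mul (hG x)
      have h2 := h1.const_mul (-(α / 4))
      refine h2.congr_deriv (Eq.symm ?_)
      have e6 : x ^ (-p) * h x = q x := by
        show x ^ (-p) * (f x / x ^ ((1:ℝ) - 4 / α)) = f x / x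
        have h3 : x ^ ((1:ℝ) - 4 / α) = x / x ^ p := by
          rw [show ((1:ℝ) - 4 / α) = 1 - p by rw [hpdef], Real.rpow_sub hx,
            Real.rpow_one]
        have h4 : x ^ (-p) = (x ^ p)⁻¹ := Real.rpow_neg hx.le p
        rw [h3, h4]
        have hxp : (x:ℝ) ^ p ≠ 0 := (Real.rpow_pos_of_pos hx p).ne'
        field_simp
      have e7 : x ^ (-p - 1) = x ^ e := by
        congr 1
        rw [hedef]; ring
      show x ^ e * G x - α / 4 * q x
          = -(α / 4) * (-p * x ^ (-p - 1) * G x + x ^ (-p) * h x)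
      rw [← e6, e7]
      have hap : α * p = 4 := by rw [hpdef]; field_simp
      linear_combination (-(x ^ e * G x) / 4) * hap
    have hucont : ContinuousWithinAt u (Set.Ici R) R :=
      (continuousAt_const.mul
        ((Real.continuousAt_rpow_const R _ (Or.inl hR.ne')).mul
          hGcont.continuousAt)).continuousWithinAt
    have hutop : Tendsto u atTop (nhds 0) := by
      have h1 : Tendsto (fun x : ℝ => -(α / 4) * (x ^ (-p) * G b)) atTop
          (nhds (-(α / 4) * (0 * G b))) :=
        ((tendsto_rpow_neg_atTop hp).mul_const (G b)).const_mul (-(α / 4))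
      rw [zero_mul, mul_zero] at h1
      apply h1.congr'
      filter_upwards [eventually_ge_atTop b] with x hbx
      show -(α / 4) * (x ^ (-p) * G b) = -(α / 4) * (x ^ (-p) * G x)
      rw [hGb x hbx]
    have huint : IntegrableOn (fun x => K x - α / 4 * q x) (Set.Ioi R) :=
      (hKint hR).sub ((hqint.const_mul (α / 4)).integrableOn)
    have hIBP : ∫ x in Set.Ioi R, (K x - α / 4 * q x) = 0 - u R :=
      integral_Ioi_of_hasDerivAt_of_tendsto hucont
        (fun x hx => hu' x (hR.trans hx)) huint hutop
    have hFR : F R = α / 4 * (R ^ (-p) * G R) + α / 4 * ∫ x in Set.Ioi R, q x := by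
      have h1 : ∫ x in Set.Ioi R, (K x - α / 4 * q x)
          = F R - α / 4 * ∫ x in Set.Ioi R, q x := by
        rw [MeasureTheory.integral_sub (hKint hR)
          ((hqint.const_mul (α / 4)).integrableOn),
          MeasureTheory.integral_const_mul]
      rw [h1] at hIBP
      have h2 : (0:ℝ) - u R = α / 4 * (R ^ (-p) * G R) := by
        show (0:ℝ) - (-(α / 4) * (R ^ (-p) * G R)) = α / 4 * (R ^ (-p) * G R)
        ring
      linarith [hIBP]
    rw [hΨeq R hR, hFR]
    have hG2 : ∫ s in Set.Ioc (0:ℝ) R, f s / s ^ ((1:ℝ) - 4 / α) = G R :=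
      (intervalIntegral.integral_of_le hR.le).symm
    have hq2 : (∫ s in Set.Ioi R, f s / s) = ∫ x in Set.Ioi R, q x := rfl
    have hpow : 1 / R ^ ((4:ℝ) / α) = R ^ (-p) := by
      rw [show ((4:ℝ) / α) = p from hpdef.symm, Real.rpow_neg hR.le, one_div]
    rw [hG2, hq2, hpow]
    field_simp
    ring

end Stmt11


open MeasureTheory

/-- Explicit solution of the radial Biot–Savart ODE in the `sin 2θ` sector,
with its integration-by-parts decomposition. -/
theorem stmt_11 (α : ℝ) (hα : α ∈ Set.Ioo (0:ℝ) 1) (f : ℝ → ℝ)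
    (hf : ContDiff ℝ (⊤ : ℕ∞) f) (hsupp : HasCompactSupport f)
    (hsupp' : tsupport f ⊆ Set.Ioi 0) :
    let Ψ2 : ℝ → ℝ := fun R =>
      -(1 / α ^ 2) * ∫ ρ in Set.Ioi R,
        (1 / ρ ^ ((4:ℝ) / α + 1)) * ∫ s in Set.Ioc (0:ℝ) ρ, f s / s ^ ((1:ℝ) - 4 / α)
    ∀ R : ℝ, 0 < R →
      (α ^ 2 * R ^ 2 * deriv (deriv Ψ2) R + (4 * α + α ^ 2) * R * deriv Ψ2 R = f R) ∧
      Ψ2 R = -(1 / (4 * α)) * (∫ s in Set.Ioi R, f s / s)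
              - (1 / (4 * α)) * (1 / R ^ ((4:ℝ) / α))
                * ∫ s in Set.Ioc (0:ℝ) R, f s / s ^ ((1:ℝ) - 4 / α) := by
  intro Ψ2 R hR
  obtain ⟨a, b, ha, h0⟩ : ∃ a b : ℝ, 0 < a ∧ ∀ s, s ∉ Set.Icc a b → f s = 0 := by
    rcases (tsupport f).eq_empty_or_nonempty with hemp | hne
    · exact ⟨1, 1, one_pos, fun s _ =>
        image_eq_zero_of_notMem_tsupport (by simp [hemp])⟩
    · obtain ⟨a, haL⟩ := hsupp.exists_isLeast hne
      obtain ⟨b, hbG⟩ := hsupp.exists_isGreatest hne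
      refine ⟨a, b, hsupp' haL.1, fun s hs => image_eq_zero_of_notMem_tsupport ?_⟩
      exact fun hmem => hs ⟨haL.2 hmem, hbG.2 hmem⟩
  exact Stmt11.main α hα.1 f hf.continuous a b ha h0 R hR
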